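/- Let H_p be the group with presentation ⟨U, V, W | [U,V]=W², W^{2p}=1, [U,W]=[V,W]=1⟩ for an integer p. Then every element of H_p can be written uniquely in the form U^q V^r W^ν with q, r ∈ ℤ and 0 ≤ ν < 2|p| (for p ≠ 0; for p = 0, ν ∈ ℤ). -/

import Mathlib

open FreeGroup
open scoped commutatorElement

/-- The relators of the group `H_p = ⟨U,V,W | [U,V]=W², W^{2p}=1, W central⟩`,
with generators indexed by `Fin 3` as `U = 0`, `V = 1`, `W = 2`. -/
def HpRels (p : ℤ) : Set (FreeGroup (Fin 3)) :=
  { ⁅of (0 : Fin 3), of (1 : Fin 3)⁆ * (of (2 : Fin 3)) ^ (-2 : ℤ),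
    (of (2 : Fin 3)) ^ (2 * p),
    ⁅of (0 : Fin 3), of (2 : Fin 3)⁆, ⁅of (1 : Fin 3), of (2 : Fin 3)⁆ }

/-- The group `H_p = π₁ Mapsₚ(S¹×S¹, S²)`. -/
abbrev Hp (p : ℤ) : Type := PresentedGroup (HpRels p)

def Hp.U (p : ℤ) : Hp p := PresentedGroup.of 0
def Hp.V (p : ℤ) : Hp p := PresentedGroup.of 1
def Hp.W (p : ℤ) : Hp p := PresentedGroup.of 2

/-! Since `W` is central and `⁅U, V⁆ = W²`, one gets `⁅U^a, V^b⁆ = W^(2ab)`, so the words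
`U^q V^r W^ν` are closed under multiplication and hence exhaust `H_p`. For uniqueness, `H_p` maps
to the semidirect product `(ℤ × ℤ/2|p|) ⋊ ℤ` in which the generator of `ℤ` acts by the shear
`(r, n) ↦ (r, n + 2r)` (conjugation by `U` on `⟨V, W⟩`); the image of `U^q V^r W^ν` has
coordinates `q`, `r` and `ν mod 2p`. -/

theorem Int.emod_eq_self_iff (ν n : ℤ) : ν % n = ν ↔ (n ≠ 0 → 0 ≤ ν ∧ ν < |n|) := by
  rcases eq_or_ne n 0 with rfl | hn
  · simp
  · simp only [ne_eq, hn, not_false_eq_true, forall_const]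
    refine ⟨fun h => h ▸ ⟨Int.emod_nonneg ν hn, Int.emod_lt_abs ν hn⟩, fun ⟨h0, h1⟩ => ?_⟩
    rw [← Int.emod_abs]
    exact Int.emod_eq_of_lt h0 h1

section Commutator

variable {G : Type*} [Group G] {x y : G}

theorem commutatorElement_zpow_right_of_commute (h : Commute ⁅x, y⁆ y) (n : ℤ) :
    ⁅x, y ^ n⁆ = ⁅x, y⁆ ^ n :=
  calc ⁅x, y ^ n⁆ = (x * y * x⁻¹) ^ n * (y ^ n)⁻¹ := by rw [conj_zpow, commutatorElement_def]
    _ = (⁅x, y⁆ * y) ^ n * (y ^ n)⁻¹ := by rw [commutatorElement_def, inv_mul_cancel_right]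
    _ = ⁅x, y⁆ ^ n := by rw [h.mul_zpow, mul_inv_cancel_right]

theorem commutatorElement_zpow_zpow_of_commute (hx : Commute ⁅x, y⁆ x) (hy : Commute ⁅x, y⁆ y)
    (m n : ℤ) : ⁅x ^ m, y ^ n⁆ = ⁅x, y⁆ ^ (m * n) := by
  have hyx : ⁅y ^ n, x⁆ = (⁅x, y⁆ ^ n)⁻¹ := by
    rw [← commutatorElement_zpow_right_of_commute hy, commutatorElement_inv]
  have hyx_comm : Commute ⁅y ^ n, x⁆ x := hyx ▸ (hx.zpow_left n).inv_left
  rw [← commutatorElement_inv, commutatorElement_zpow_right_of_commute hyx_comm, hyx, inv_zpow,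
    inv_inv, ← zpow_mul, mul_comm]

end Commutator

namespace SemidirectProduct

variable {N G : Type*} [Group N] [Group G] {φ : G →* MulAut N}

theorem commutatorElement_inr_inl (g : G) (n : N) :
    ⁅(inr g : N ⋊[φ] G), (inl n : N ⋊[φ] G)⁆ = inl (φ g n * n⁻¹) := by
  rw [commutatorElement_def, ← _root_.map_inv inr g, ← inl_aut, ← _root_.map_inv, ← _root_.map_mul]

end SemidirectProduct

namespace Hp

variable {p : ℤ}

lemma commutatorElement_U_V : ⁅U p, V p⁆ = W p ^ (2 : ℤ) := by
  have h := PresentedGroup.one_of_mem (rels := HpRels p) (Set.mem_insert _ _)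
  rwa [_root_.map_mul, map_commutatorElement, map_zpow, mul_eq_one_iff_eq_inv, ← zpow_neg] at h

lemma W_zpow_two_mul : W p ^ (2 * p) = 1 := by
  have h := PresentedGroup.one_of_mem (rels := HpRels p) (x := of 2 ^ (2 * p)) (by simp [HpRels])
  rwa [map_zpow] at h

lemma commute_U_W : Commute (U p) (W p) := by
  have h := PresentedGroup.one_of_mem (rels := HpRels p) (x := ⁅of (0 : Fin 3), of 2⁆)
    (by simp [HpRels])
  rwa [map_commutatorElement, commutatorElement_eq_one_iff_commute] at h

lemma commute_V_W : Commute (V p) (W p) := by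
  have h := PresentedGroup.one_of_mem (rels := HpRels p) (x := ⁅of (1 : Fin 3), of 2⁆)
    (by simp [HpRels])
  rwa [map_commutatorElement, commutatorElement_eq_one_iff_commute] at h

lemma W_mem_center : W p ∈ Subgroup.center (Hp p) := by
  have hgen : Set.range (PresentedGroup.of (rels := HpRels p)) ⊆ Subgroup.centralizer {W p} := by
    rintro _ ⟨i, rfl⟩
    rw [SetLike.mem_coe, Subgroup.mem_centralizer_singleton_iff]
    fin_cases i
    exacts [commute_U_W.eq, commute_V_W.eq, rfl]
  refine Subgroup.mem_center_iff.2 fun g => Subgroup.mem_centralizer_singleton_iff.1 ?_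
  exact (Subgroup.closure_le _).2 hgen (by simp)

lemma commute_W_zpow (k : ℤ) (g : Hp p) : Commute (W p ^ k) g :=
  (Subgroup.mem_center_iff.1 (zpow_mem W_mem_center k) g).symm

lemma V_zpow_mul_U_zpow (a b : ℤ) :
    V p ^ b * U p ^ a = U p ^ a * V p ^ b * W p ^ (-(2 * a * b)) := by
  have hc (g : Hp p) : Commute ⁅U p, V p⁆ g := commutatorElement_U_V (p := p) ▸ commute_W_zpow 2 g
  have h := commutatorElement_zpow_zpow_of_commute (hc _) (hc _) a b
  rw [commutatorElement_U_V, ← zpow_mul, commutatorElement_def] at h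
  calc V p ^ b * U p ^ a = W p ^ (-(2 * a * b)) * (W p ^ (2 * (a * b)) * V p ^ b * U p ^ a) := by
        group
    _ = W p ^ (-(2 * a * b)) * (U p ^ a * V p ^ b) := by rw [← h]; group
    _ = U p ^ a * V p ^ b * W p ^ (-(2 * a * b)) := (commute_W_zpow _ _).eq

lemma mul_W_zpow_mul (x y : Hp p) (k : ℤ) : x * W p ^ k * y = x * y * W p ^ k := by
  rw [mul_assoc, (commute_W_zpow k y).eq, mul_assoc]

lemma normalForm_mul_normalForm (a b c d e f : ℤ) :
    U p ^ a * V p ^ b * W p ^ c * (U p ^ d * V p ^ e * W p ^ f) =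
      U p ^ (a + d) * V p ^ (b + e) * W p ^ (c + f - 2 * d * b) :=
  calc U p ^ a * V p ^ b * W p ^ c * (U p ^ d * V p ^ e * W p ^ f)
      = U p ^ a * (V p ^ b * U p ^ d) * V p ^ e * W p ^ f * W p ^ c := by
        rw [mul_W_zpow_mul]; group
    _ = U p ^ a * U p ^ d * V p ^ b * W p ^ (-(2 * d * b)) * V p ^ e * W p ^ f * W p ^ c := by
        rw [V_zpow_mul_U_zpow]; group
    _ = U p ^ (a + d) * V p ^ (b + e) * W p ^ (c + f - 2 * d * b) := by
        rw [mul_W_zpow_mul _ (V p ^ e)]; group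

lemma exists_normalForm (g : Hp p) : ∃ q r ν : ℤ, g = U p ^ q * V p ^ r * W p ^ ν := by
  have closed_mul {x y : Hp p} : (∃ q r ν : ℤ, x = U p ^ q * V p ^ r * W p ^ ν) →
      (∃ q r ν : ℤ, y = U p ^ q * V p ^ r * W p ^ ν) →
      ∃ q r ν : ℤ, x * y = U p ^ q * V p ^ r * W p ^ ν := by
    rintro ⟨a, b, c, rfl⟩ ⟨d, e, f, rfl⟩
    exact ⟨_, _, _, normalForm_mul_normalForm a b c d e f⟩
  have gen_zpow (i : Fin 3) (ε : ℤ) :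
      ∃ q r ν : ℤ, (PresentedGroup.of i : Hp p) ^ ε = U p ^ q * V p ^ r * W p ^ ν := by
    fin_cases i
    exacts [⟨ε, 0, 0, by simp [U]⟩, ⟨0, ε, 0, by simp [V]⟩, ⟨0, 0, ε, by simp [W]⟩]
  have hg : g ∈ Subgroup.closure (Set.range PresentedGroup.of) := by simp
  induction hg using Subgroup.closure_induction_right with
  | one => exact ⟨0, 0, 0, by simp⟩
  | mul_right x _ y hy hx =>
    obtain ⟨i, rfl⟩ := hy
    exact closed_mul hx (zpow_one (PresentedGroup.of i : Hp p) ▸ gen_zpow i 1)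
  | mul_inv_cancel x _ y hy hx =>
    obtain ⟨i, rfl⟩ := hy
    exact closed_mul hx (zpow_neg_one (PresentedGroup.of i : Hp p) ▸ gen_zpow i (-1))

section Model

open SemidirectProduct Multiplicative

def shear (m : ℕ) : ℤ × ZMod m ≃+ ℤ × ZMod m where
  toFun x := (x.1, x.2 + 2 * x.1)
  invFun x := (x.1, x.2 - 2 * x.1)
  left_inv x := by simp
  right_inv x := by simp
  map_add' x y := Prod.ext rfl (by simp only [Prod.snd_add, Prod.fst_add]; push_cast; ring)

abbrev Model (m : ℕ) : Type :=
  Multiplicative (ℤ × ZMod m) ⋊[zpowersHom _ (AddEquiv.toMultiplicative (shear m))]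
    Multiplicative ℤ

def modelGen (m : ℕ) : Fin 3 → Model m
  | 0 => inr (ofAdd 1)
  | 1 => inl (ofAdd (1, 0))
  | 2 => inl (ofAdd (0, 1))

lemma lift_modelGen_eq_one : ∀ r ∈ HpRels p, FreeGroup.lift (modelGen (2 * p).natAbs) r = 1 := by
  simp only [HpRels, Set.mem_insert_iff, Set.mem_singleton_iff]
  rintro r (rfl | rfl | rfl | rfl) <;>
    simp only [_root_.map_mul, map_zpow, map_commutatorElement, FreeGroup.lift_apply_of, modelGen,
      commutatorElement_inr_inl]
  · rw [← map_zpow, ← _root_.map_mul, ← _root_.map_mul, map_eq_one_iff _ inl_injective]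
    simp [← ofAdd_nsmul, ← ofAdd_neg, ← ofAdd_add, shear]
  · rw [← map_zpow, map_eq_one_iff _ inl_injective, ← ofAdd_zsmul, ofAdd_eq_one]
    ext
    · simp
    · simpa using (ZMod.intCast_zmod_eq_zero_iff_dvd (2 * p) _).2 (Int.natAbs_dvd.2 dvd_rfl)
  · rw [← _root_.map_mul, map_eq_one_iff _ inl_injective]
    simp [shear]
  · rw [← map_commutatorElement, map_eq_one_iff _ inl_injective,
      commutatorElement_eq_one_iff_commute]
    exact Commute.all _ _

noncomputable def toModel (p : ℤ) : Hp p →* Model (2 * p).natAbs :=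
  PresentedGroup.toGroup lift_modelGen_eq_one

lemma toModel_normalForm (q r ν : ℤ) :
    toModel p (U p ^ q * V p ^ r * W p ^ ν) = inr (ofAdd q) * (inl (ofAdd (r, ν)) : Model _) := by
  simp only [_root_.map_mul, map_zpow, toModel, U, V, W, PresentedGroup.toGroup.of, modelGen]
  rw [← map_zpow inr, ← map_zpow inl, ← map_zpow inl, mul_assoc, ← _root_.map_mul inl,
    ← ofAdd_zsmul, ← ofAdd_zsmul, ← ofAdd_zsmul, ← ofAdd_add]
  simp

lemma normalForm_eq_iff {q r ν q' r' ν' : ℤ} :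
    U p ^ q * V p ^ r * W p ^ ν = U p ^ q' * V p ^ r' * W p ^ ν' ↔
      q = q' ∧ r = r' ∧ ν ≡ ν' [ZMOD 2 * p] := by
  constructor
  · intro h
    have h' := congrArg (toModel p) h
    rw [toModel_normalForm, toModel_normalForm] at h'
    obtain rfl : q = q' := by simpa using congrArg right h'
    rw [mul_right_inj, inl_injective.eq_iff, ofAdd.injective.eq_iff, Prod.mk.injEq,
      ZMod.intCast_eq_intCast_iff, Int.natCast_natAbs, Int.modEq_abs] at h'
    exact ⟨rfl, h'⟩
  · rintro ⟨rfl, rfl, h⟩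
    obtain ⟨k, hk⟩ := h.dvd
    rw [show ν' = ν + 2 * p * k by omega, zpow_add, zpow_mul, W_zpow_two_mul, one_zpow, mul_one]

end Model

end Hp

/-- Every element of `H_p = ⟨U,V,W | [U,V]=W², W^{2p}=1, W central⟩` can be written
uniquely as `U^q V^r W^ν` with `q, r, ν ∈ ℤ`, where for `p ≠ 0` the exponent `ν`
is normalized by `0 ≤ ν < 2|p|` (for `p = 0`, `ν` is an arbitrary integer). -/
theorem Hp_normal_form (p : ℤ) (g : Hp p) :
    ∃! qrν : ℤ × ℤ × ℤ,
      (p ≠ 0 → 0 ≤ qrν.2.2 ∧ qrν.2.2 < 2 * |p|) ∧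
      g = Hp.U p ^ qrν.1 * Hp.V p ^ qrν.2.1 * Hp.W p ^ qrν.2.2 := by
  have normalized (ν : ℤ) : (p ≠ 0 → 0 ≤ ν ∧ ν < 2 * |p|) ↔ ν % (2 * p) = ν := by
    simp [Int.emod_eq_self_iff, abs_mul]
  obtain ⟨q, r, ν, rfl⟩ := Hp.exists_normalForm g
  refine ⟨(q, r, ν % (2 * p)), ⟨(normalized _).2 (Int.emod_emod ν _),
    Hp.normalForm_eq_iff.2 ⟨rfl, rfl, (Int.mod_modEq ν _).symm⟩⟩, ?_⟩
  rintro ⟨q', r', ν'⟩ ⟨hν', h⟩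
  obtain ⟨rfl, rfl, hν⟩ := Hp.normalForm_eq_iff.1 h.symm
  rw [← (normalized ν').1 hν', ← hν]
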